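/- arXiv:1803.04673 — 2 statements merged into one kernel-verified Lean document; each statement's English description precedes it below -/
import Mathlib

section
/- Assume U is nonempty and there exists x̄ ∈ X with p(x̄) ∈ ℝ (i.e., dom p ≠ ∅), and let x* ∈ X*. The following statements are equivalent: (i) strong robust duality holds at x*, i.e., there exist u ∈ U and y_u* ∈ Y_u* with p*(x*) = F_u*(x*, y_u*) = q(x*); (ii) there exist u ∈ U and y_u* ∈ Y_u* such that (M^ε p)(x*) = B^ε_{(u,y_u*)}(x*) for all ε ≥ 0; (iii) there exist ε̄ > 0, u ∈ U and y_u* ∈ Y_u* such that (M^ε p)(x*) = B^ε_{(u,y_u*)}(x*) for all ε ∈ (0, ε̄). -/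
/-!
Weak duality `p*(x*) ≤ F_u*(x*, y*)` makes every point of `B^ε_{(u,y*)}(x*)` an `ε`-minimizer
of `p - x*`. Conversely, if `p*(x*) = F_u*(x*, y*)`, an `ε`-minimizer `x` of `p - x*` lies in
`A^{(ε₁,ε₂)}_{(u,y*)}(x*)` with `ε₁ = p(x) - F_u(x, 0)`. Finally, if the two sets agree for all small
`ε > 0`, pick any `ε`-minimizer (one exists once `p*(x*) < +∞`, as `dom p ≠ ∅` gives
`p*(x*) > -∞`); it gives `F_u*(x*, y*) ≤ p*(x*) + ε`, and letting `ε → 0` yields strong duality.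
-/

noncomputable section

namespace RobustDuality

/-- The set of `ε`-minimizers of an extended-real-valued function `h`:
`{z | h z ∈ ℝ ∧ h z ≤ inf h + ε}` (empty when `inf h ∉ ℝ`). -/
def epsArgmin {Z : Type*} (h : Z → EReal) (ε : ℝ) : Set Z :=
  {z | (∃ r : ℝ, h z = (r : EReal)) ∧ h z ≤ (⨅ w, h w) + (ε : EReal)}

variable {X : Type*} [AddCommGroup X] [Module ℝ X] [TopologicalSpace X]
  [IsTopologicalAddGroup X] [ContinuousSMul ℝ X] [LocallyConvexSpace ℝ X] [T2Space X]

/-- `(M^ε h)(x*) := ε-argmin (h - x*)` for `h : X → EReal` and `x* ∈ X*`. -/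
def M1 (h : X → EReal) (ε : ℝ) (xs : X →L[ℝ] ℝ) : Set X :=
  epsArgmin (fun x => h x - ((xs x : ℝ) : EReal)) ε

/-- Fenchel conjugate of `h : X → EReal`. -/
def conj1 (h : X → EReal) (xs : X →L[ℝ] ℝ) : EReal :=
  ⨆ x : X, ((xs x : ℝ) : EReal) - h x

/-- `ε`-subdifferential of `h : X → EReal` at `a`. -/
def epsSubdiff1 (h : X → EReal) (ε : ℝ) (a : X) : Set (X →L[ℝ] ℝ) :=
  {xs | (∃ r : ℝ, h a = (r : EReal)) ∧
    ∀ x, h a + ((xs x - xs a - ε : ℝ) : EReal) ≤ h x}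

section Pair

variable {Yu : Type*} [AddCommGroup Yu] [Module ℝ Yu] [TopologicalSpace Yu]
  [IsTopologicalAddGroup Yu] [ContinuousSMul ℝ Yu] [LocallyConvexSpace ℝ Yu] [T2Space Yu]

/-- Fenchel conjugate of `F : X × Y → EReal` at `(x*, y*)`. -/
def conj2 (F : X × Yu → EReal) (xs : X →L[ℝ] ℝ) (ys : Yu →L[ℝ] ℝ) : EReal :=
  ⨆ z : X × Yu, ((xs z.1 + ys z.2 : ℝ) : EReal) - F z

/-- `(M^ε F)(x*, y*) := ε-argmin (F - (x*, y*))`. -/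
def M2 (F : X × Yu → EReal) (ε : ℝ) (xs : X →L[ℝ] ℝ) (ys : Yu →L[ℝ] ℝ) : Set (X × Yu) :=
  epsArgmin (fun z => F z - ((xs z.1 + ys z.2 : ℝ) : EReal)) ε

/-- `ε`-subdifferential of `F : X × Y → EReal` at `a`, as a set of dual pairs. -/
def epsSubdiff2 (F : X × Yu → EReal) (ε : ℝ) (a : X × Yu) :
    Set ((X →L[ℝ] ℝ) × (Yu →L[ℝ] ℝ)) :=
  {zs | (∃ r : ℝ, F a = (r : EReal)) ∧
    ∀ z, F a + ((zs.1 z.1 + zs.2 z.2 - zs.1 a.1 - zs.2 a.2 - ε : ℝ) : EReal) ≤ F z}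

end Pair

variable {U : Type*} {Y : U → Type*} [∀ u, AddCommGroup (Y u)] [∀ u, Module ℝ (Y u)]
  [∀ u, TopologicalSpace (Y u)] [∀ u, IsTopologicalAddGroup (Y u)]
  [∀ u, ContinuousSMul ℝ (Y u)] [∀ u, LocallyConvexSpace ℝ (Y u)] [∀ u, T2Space (Y u)]

/-- The robust objective `p := sup_{u ∈ U} F_u (·, 0_u)`. -/
def pRob (F : ∀ u, X × Y u → EReal) (x : X) : EReal := ⨆ u, F u (x, 0)

/-- `q := inf over u ∈ U and y* ∈ Y_u* of F_u*(·, y*)`. -/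
def qRob (F : ∀ u, X × Y u → EReal) (xs : X →L[ℝ] ℝ) : EReal :=
  ⨅ (u : U) (ys : Y u →L[ℝ] ℝ), conj2 (F u) xs ys

/-- `S^ε(x*) := {x : p x ∈ ℝ ∧ p x - ⟨x*, x⟩ ≤ -q x* + ε}`. -/
def Sset (F : ∀ u, X × Y u → EReal) (ε : ℝ) (xs : X →L[ℝ] ℝ) : Set X :=
  {x | (∃ r : ℝ, pRob F x = (r : EReal)) ∧
    pRob F x - ((xs x : ℝ) : EReal) ≤ -qRob F xs + (ε : EReal)}

/-- `J^ε(u) := {x : p x ∈ ℝ ∧ p x ≤ F_u(x, 0) + ε}`. -/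
def Jset (F : ∀ u, X × Y u → EReal) (ε : ℝ) (u : U) : Set X :=
  {x | (∃ r : ℝ, pRob F x = (r : EReal)) ∧ pRob F x ≤ F u (x, 0) + (ε : EReal)}

/-- `A^{(ε₁,ε₂)}_{(u,y*)}(x*) := {x ∈ J^{ε₁}(u) : (x, 0) ∈ (M^{ε₂}F_u)(x*, y*)}`. -/
def Aset (F : ∀ u, X × Y u → EReal) (ε₁ ε₂ : ℝ) (u : U) (ys : Y u →L[ℝ] ℝ)
    (xs : X →L[ℝ] ℝ) : Set X :=
  {x | x ∈ Jset F ε₁ u ∧ (x, (0 : Y u)) ∈ M2 (F u) ε₂ xs ys}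

/-- `𝒜^ε(x*)`. -/
def calA (F : ∀ u, X × Y u → EReal) (ε : ℝ) (xs : X →L[ℝ] ℝ) : Set X :=
  ⋂ (η : ℝ) (_ : 0 < η),
    ⋃ (u : U) (ys : Y u →L[ℝ] ℝ) (ε₁ : ℝ) (ε₂ : ℝ)
      (_ : 0 ≤ ε₁) (_ : 0 ≤ ε₂) (_ : ε₁ + ε₂ = ε + η), Aset F ε₁ ε₂ u ys xs

/-- `B^ε_{(u,y*)}(x*)`. -/
def Bset (F : ∀ u, X × Y u → EReal) (ε : ℝ) (u : U) (ys : Y u →L[ℝ] ℝ)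
    (xs : X →L[ℝ] ℝ) : Set X :=
  ⋃ (ε₁ : ℝ) (ε₂ : ℝ) (_ : 0 ≤ ε₁) (_ : 0 ≤ ε₂) (_ : ε₁ + ε₂ = ε),
    Aset F ε₁ ε₂ u ys xs

/-- `B^ε(x*) := ⋃_{u, y*} B^ε_{(u,y*)}(x*)`. -/
def BsetAll (F : ∀ u, X × Y u → EReal) (ε : ℝ) (xs : X →L[ℝ] ℝ) : Set X :=
  ⋃ (u : U) (ys : Y u →L[ℝ] ℝ), Bset F ε u ys xs

/-- `I^ε(x)`: the set of `ε`-active indices at `x`. -/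
def Iset (F : ∀ u, X × Y u → EReal) (ε : ℝ) (x : X) : Set U :=
  {u | (∃ r : ℝ, pRob F x = (r : EReal)) ∧ pRob F x - (ε : EReal) ≤ F u (x, 0)}

/-- `C^ε(x)`. -/
def Cset (F : ∀ u, X × Y u → EReal) (ε : ℝ) (x : X) : Set (X →L[ℝ] ℝ) :=
  ⋂ (η : ℝ) (_ : 0 < η),
    ⋃ (ε₁ : ℝ) (ε₂ : ℝ) (_ : 0 ≤ ε₁) (_ : 0 ≤ ε₂) (_ : ε₁ + ε₂ = ε + η)
      (u : U) (_ : u ∈ Iset F ε₁ x),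
      Prod.fst '' epsSubdiff2 (F u) ε₂ (x, (0 : Y u))

/-- `D^ε(x)`. -/
def Dset (F : ∀ u, X × Y u → EReal) (ε : ℝ) (x : X) : Set (X →L[ℝ] ℝ) :=
  ⋃ (ε₁ : ℝ) (ε₂ : ℝ) (_ : 0 ≤ ε₁) (_ : 0 ≤ ε₂) (_ : ε₁ + ε₂ = ε)
    (u : U) (_ : u ∈ Iset F ε₁ x),
    Prod.fst '' epsSubdiff2 (F u) ε₂ (x, (0 : Y u))

/-- The exact active index set `I(x) := {u : F_u(x,0) = p(x)}` (when `p(x) ∈ ℝ`). -/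
def I0set (F : ∀ u, X × Y u → EReal) (x : X) : Set U :=
  {u | (∃ r : ℝ, pRob F x = (r : EReal)) ∧ F u (x, 0) = pRob F x}

/-- `D(x) := ⋃_{u ∈ I(x)} proj_{X*} ∂F_u(x, 0)`. -/
def D0set (F : ∀ u, X × Y u → EReal) (x : X) : Set (X →L[ℝ] ℝ) :=
  ⋃ (u : U) (_ : u ∈ I0set F x), Prod.fst '' epsSubdiff2 (F u) 0 (x, (0 : Y u))

/-- `B_{(u,y*)}(x*) := {x ∈ J(u) : (x, 0) ∈ (M F_u)(x*, y*)}`. -/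
def B0set (F : ∀ u, X × Y u → EReal) (u : U) (ys : Y u →L[ℝ] ℝ)
    (xs : X →L[ℝ] ℝ) : Set X :=
  {x | (∃ r : ℝ, pRob F x = (r : EReal)) ∧ F u (x, 0) = pRob F x ∧
    (x, (0 : Y u)) ∈ M2 (F u) 0 xs ys}

lemma _root_.EReal.neg_coe_sub (c : ℝ) (a : EReal) : -((c : EReal) - a) = a - c := by
  rw [EReal.neg_sub (.inl (EReal.coe_ne_bot c)) (.inl (EReal.coe_ne_top c)), add_comm,
    sub_eq_add_neg]

lemma _root_.EReal.iInf_sub_coe {ι : Sort*} (h : ι → EReal) (c : ι → ℝ) :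
    ⨅ i, (h i - c i) = -⨆ i, ((c i : EReal) - h i) := by
  refine le_antisymm ?_ (le_iInf fun i => ?_)
  · refine EReal.le_neg_of_le_neg (iSup_le fun i => EReal.le_neg_of_le_neg ?_)
    exact (EReal.neg_coe_sub (c i) (h i)).symm ▸ iInf_le _ i
  · exact EReal.neg_coe_sub (c i) (h i) ▸
      EReal.neg_le_neg_iff.2 (le_iSup (fun i => (c i : EReal) - h i) i)

lemma _root_.EReal.exists_sub_coe_eq_coe_iff (a : EReal) (c : ℝ) :
    (∃ r : ℝ, a - c = r) ↔ ∃ r : ℝ, a = r := by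
  induction a using EReal.rec with
  | bot => simp
  | coe t => exact iff_of_true ⟨t - c, rfl⟩ ⟨t, rfl⟩
  | top => simp

lemma _root_.EReal.le_coe_of_forall_le_coe_add {b : EReal} {a δ : ℝ} (hδ : 0 < δ)
    (h : ∀ ε : ℝ, 0 < ε → ε < δ → b ≤ ((a + ε : ℝ) : EReal)) : b ≤ a := by
  refine EReal.le_of_forall_lt_iff_le.1 fun z hz => ?_
  have hz : a < z := EReal.coe_lt_coe_iff.1 hz
  have hε : 0 < min (z - a) (δ / 2) := lt_min (by linarith) (by linarith)
  refine (h _ hε (by linarith [min_le_right (z - a) (δ / 2)])).trans (EReal.coe_le_coe_iff.2 ?_)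
  linarith [min_le_left (z - a) (δ / 2)]

lemma epsArgmin_nonempty {Z : Type*} {h : Z → EReal} {m ε : ℝ} (hm : ⨅ z, h z = m)
    (hε : 0 < ε) : (epsArgmin h ε).Nonempty := by
  obtain ⟨z, hz⟩ := iInf_lt_iff.1 (hm ▸ (EReal.coe_lt_coe_iff.2 (lt_add_of_pos_right m hε)))
  have hz_bot : h z ≠ ⊥ := ne_bot_of_le_ne_bot (hm ▸ EReal.coe_ne_bot m) (iInf_le h z)
  refine ⟨z, ⟨(h z).toReal, (EReal.coe_toReal (hz.trans (EReal.coe_lt_top _)).ne hz_bot).symm⟩, ?_⟩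
  rw [hm]
  exact hz.le

section
omit [IsTopologicalAddGroup X] [ContinuousSMul ℝ X] [LocallyConvexSpace ℝ X] [T2Space X]
  [∀ u, IsTopologicalAddGroup (Y u)] [∀ u, ContinuousSMul ℝ (Y u)]
  [∀ u, LocallyConvexSpace ℝ (Y u)] [∀ u, T2Space (Y u)]

lemma le_conj1 (h : X → EReal) (xs : X →L[ℝ] ℝ) (x : X) :
    ((xs x : ℝ) : EReal) - h x ≤ conj1 h xs :=
  le_iSup (fun x => ((xs x : ℝ) : EReal) - h x) x

lemma iInf_sub_eq_neg_conj1 (h : X → EReal) (xs : X →L[ℝ] ℝ) :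
    ⨅ x, h x - ((xs x : ℝ) : EReal) = -conj1 h xs :=
  EReal.iInf_sub_coe _ _

section Pair

variable {Yu : Type*} [AddCommGroup Yu] [Module ℝ Yu] [TopologicalSpace Yu]

lemma le_conj2 (F : X × Yu → EReal) (xs : X →L[ℝ] ℝ) (ys : Yu →L[ℝ] ℝ) (z : X × Yu) :
    ((xs z.1 + ys z.2 : ℝ) : EReal) - F z ≤ conj2 F xs ys :=
  le_iSup (fun z : X × Yu => ((xs z.1 + ys z.2 : ℝ) : EReal) - F z) z

lemma iInf_sub_eq_neg_conj2 (F : X × Yu → EReal) (xs : X →L[ℝ] ℝ) (ys : Yu →L[ℝ] ℝ) :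
    ⨅ z : X × Yu, F z - ((xs z.1 + ys z.2 : ℝ) : EReal) = -conj2 F xs ys :=
  EReal.iInf_sub_coe _ _

end Pair

variable (F : ∀ u, X × Y u → EReal) (xs : X →L[ℝ] ℝ)

lemma conj1_pRob_le_conj2 (u : U) (ys : Y u →L[ℝ] ℝ) :
    conj1 (pRob F) xs ≤ conj2 (F u) xs ys := by
  refine iSup_le fun x => ?_
  calc ((xs x : ℝ) : EReal) - pRob F x ≤ ((xs x : ℝ) : EReal) - F u (x, 0) :=
        EReal.sub_le_sub le_rfl (le_iSup (fun u => F u (x, 0)) u)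
    _ = ((xs x + ys 0 : ℝ) : EReal) - F u (x, 0) := by rw [map_zero, add_zero]
    _ ≤ conj2 (F u) xs ys := le_conj2 (F u) xs ys (x, 0)

lemma conj1_pRob_le_qRob : conj1 (pRob F) xs ≤ qRob F xs :=
  le_iInf₂ (conj1_pRob_le_conj2 F xs)

lemma qRob_le_conj2 (u : U) (ys : Y u →L[ℝ] ℝ) : qRob F xs ≤ conj2 (F u) xs ys :=
  iInf₂_le (f := fun u ys => conj2 (F u) xs ys) u ys

variable {F xs}

lemma sub_le_neg_conj2_add_of_mem_Bset {ε : ℝ} {u : U} {ys : Y u →L[ℝ] ℝ} {x : X}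
    (hx : x ∈ Bset F ε u ys xs) :
    pRob F x - ((xs x : ℝ) : EReal) ≤ -conj2 (F u) xs ys + ε := by
  simp only [Bset, Set.mem_iUnion] at hx
  obtain ⟨ε₁, ε₂, -, -, rfl, ⟨-, hJ⟩, -, hM⟩ := hx
  beta_reduce at hM
  rw [iInf_sub_eq_neg_conj2, map_zero, add_zero] at hM
  calc pRob F x - ((xs x : ℝ) : EReal) ≤ F u (x, 0) + ε₁ - ((xs x : ℝ) : EReal) :=
        EReal.sub_le_sub hJ le_rfl
    _ = F u (x, 0) - ((xs x : ℝ) : EReal) + ε₁ := by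
        simp only [sub_eq_add_neg, add_right_comm]
    _ ≤ -conj2 (F u) xs ys + ε₂ + ε₁ := add_le_add_left hM _
    _ = -conj2 (F u) xs ys + ((ε₁ + ε₂ : ℝ) : EReal) := by
        rw [add_assoc, ← EReal.coe_add, add_comm ε₂]

lemma Bset_subset_M1 (ε : ℝ) (u : U) (ys : Y u →L[ℝ] ℝ) :
    Bset F ε u ys xs ⊆ M1 (pRob F) ε xs := by
  intro x hx
  have hp : ∃ r : ℝ, pRob F x = r := by
    simp only [Bset, Set.mem_iUnion] at hx
    obtain ⟨-, -, -, -, -, ⟨hp, -⟩, -⟩ := hx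
    exact hp
  refine ⟨(EReal.exists_sub_coe_eq_coe_iff _ _).2 hp, ?_⟩
  beta_reduce
  rw [iInf_sub_eq_neg_conj1]
  exact (sub_le_neg_conj2_add_of_mem_Bset hx).trans
    (add_le_add_left (EReal.neg_le_neg_iff.2 (conj1_pRob_le_conj2 F xs u ys)) _)

lemma M1_subset_Bset_of_conj1_eq_conj2 {u : U} {ys : Y u →L[ℝ] ℝ}
    (h : conj1 (pRob F) xs = conj2 (F u) xs ys) (ε : ℝ) :
    M1 (pRob F) ε xs ⊆ Bset F ε u ys xs := by
  rintro x ⟨hreal, hle⟩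
  beta_reduce at hreal hle
  obtain ⟨r, hr⟩ := (EReal.exists_sub_coe_eq_coe_iff _ _).1 hreal
  rw [iInf_sub_eq_neg_conj1, hr] at hle
  have hconj1 := le_conj1 (pRob F) xs x
  have hconj2 := le_conj2 (F u) xs ys (x, 0)
  have hFp : F u (x, 0) ≤ r := (le_iSup (fun u => F u (x, 0)) u).trans_eq hr
  rw [hr, ← EReal.coe_sub] at hconj1
  rw [← h] at hconj2
  have ha_top : conj1 (pRob F) xs ≠ ⊤ := fun htop => by
    rw [htop, EReal.neg_top, EReal.bot_add, ← EReal.coe_sub, le_bot_iff] at hle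
    exact EReal.coe_ne_bot _ hle
  obtain ⟨a, ha⟩ : ∃ a : ℝ, conj1 (pRob F) xs = a :=
    ⟨_, (EReal.coe_toReal ha_top (ne_bot_of_le_ne_bot (EReal.coe_ne_bot _) hconj1)).symm⟩
  rw [ha] at hle hconj2
  have hs_bot : F u (x, 0) ≠ ⊥ := fun hbot => by
    rw [hbot, EReal.coe_sub_bot, top_le_iff] at hconj2
    exact EReal.coe_ne_top _ hconj2
  obtain ⟨s, hs⟩ : ∃ s : ℝ, F u (x, 0) = s :=
    ⟨_, (EReal.coe_toReal (ne_top_of_le_ne_top (EReal.coe_ne_top r) hFp) hs_bot).symm⟩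
  rw [hs] at hFp hconj2
  norm_cast at hFp hconj2 hle
  simp only [map_zero, add_zero] at hconj2
  simp only [Bset, Set.mem_iUnion]
  refine ⟨r - s, ε - (r - s), by linarith, by linarith, by ring, ⟨⟨r, hr⟩, ?_⟩, ?_⟩
  · rw [hr, hs]; norm_cast; linarith
  · refine ⟨⟨s - (xs x + ys 0), by beta_reduce; rw [hs]; rfl⟩, ?_⟩
    beta_reduce
    rw [iInf_sub_eq_neg_conj2, ← h, ha, hs, map_zero, add_zero]
    norm_cast
    linarith

lemma conj2_le_conj1_of_M1_subset_Bset (hdom : ∃ x₀ : X, ∃ r : ℝ, pRob F x₀ = r)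
    {u : U} {ys : Y u →L[ℝ] ℝ} {δ : ℝ} (hδ : 0 < δ)
    (hMB : ∀ ε : ℝ, 0 < ε → ε < δ → M1 (pRob F) ε xs ⊆ Bset F ε u ys xs) :
    conj2 (F u) xs ys ≤ conj1 (pRob F) xs := by
  obtain ⟨x₀, r₀, hr₀⟩ := hdom
  obtain htop | hne_top := eq_or_ne (conj1 (pRob F) xs) ⊤
  · exact htop ▸ le_top
  have hbot : conj1 (pRob F) xs ≠ ⊥ := by
    have := le_conj1 (pRob F) xs x₀
    rw [hr₀, ← EReal.coe_sub] at this
    exact ne_bot_of_le_ne_bot (EReal.coe_ne_bot _) this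
  obtain ⟨a, ha⟩ : ∃ a : ℝ, conj1 (pRob F) xs = a := ⟨_, (EReal.coe_toReal hne_top hbot).symm⟩
  have hinf : ⨅ x, pRob F x - ((xs x : ℝ) : EReal) = ((-a : ℝ) : EReal) := by
    rw [iInf_sub_eq_neg_conj1, ha, EReal.coe_neg]
  rw [ha]
  refine EReal.le_coe_of_forall_le_coe_add hδ fun ε hε hεδ => ?_
  obtain ⟨x, hx⟩ := epsArgmin_nonempty hinf hε
  have hlow : ((-a : ℝ) : EReal) ≤ pRob F x - ((xs x : ℝ) : EReal) := hinf ▸ iInf_le _ x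
  have hup := sub_le_neg_conj2_add_of_mem_Bset (hMB ε hε hεδ hx)
  calc conj2 (F u) xs ys ≤ -(((-a : ℝ) : EReal) - ε) :=
        EReal.le_neg_of_le_neg (EReal.sub_le_of_le_add (hlow.trans hup))
    _ = ((a + ε : ℝ) : EReal) := by rw [← EReal.coe_sub, ← EReal.coe_neg]; ring_nf

end

theorem strong_robust_duality_iff_M_eq_Bset_general
    (F : ∀ u, X × Y u → EReal)
    (hdomp : ∃ xbar : X, ∃ r : ℝ, pRob F xbar = (r : EReal)) (xs : X →L[ℝ] ℝ) :
    List.TFAE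
      [∃ (u : U) (ys : Y u →L[ℝ] ℝ),
         conj1 (pRob F) xs = conj2 (F u) xs ys ∧ conj2 (F u) xs ys = qRob F xs,
       ∃ (u : U) (ys : Y u →L[ℝ] ℝ),
         ∀ ε : ℝ, 0 ≤ ε → M1 (pRob F) ε xs = Bset F ε u ys xs,
       ∃ εbar : ℝ, 0 < εbar ∧ ∃ (u : U) (ys : Y u →L[ℝ] ℝ),
         ∀ ε : ℝ, 0 < ε → ε < εbar → M1 (pRob F) ε xs = Bset F ε u ys xs] := by
  tfae_have 1 → 2 := fun ⟨u, ys, h, _⟩ =>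
    ⟨u, ys, fun ε _ => (M1_subset_Bset_of_conj1_eq_conj2 h ε).antisymm (Bset_subset_M1 ε u ys)⟩
  tfae_have 2 → 3 := fun ⟨u, ys, h⟩ => ⟨1, one_pos, u, ys, fun ε hε _ => h ε hε.le⟩
  tfae_have 3 → 1 := by
    rintro ⟨εbar, hεbar, u, ys, h⟩
    have hdual : conj1 (pRob F) xs = conj2 (F u) xs ys :=
      (conj1_pRob_le_conj2 F xs u ys).antisymm
        (conj2_le_conj1_of_M1_subset_Bset hdomp hεbar fun ε h₀ hε => (h ε h₀ hε).subset)
    exact ⟨u, ys, hdual, (qRob_le_conj2 F xs u ys).antisymm' (hdual ▸ conj1_pRob_le_qRob F xs)⟩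
  tfae_finish

/-- Theorem 4.1 (strong robust duality). -/
theorem strong_robust_duality_iff_M_eq_Bset
    (F : ∀ u, X × Y u → EReal) (hU : Nonempty U) (hF : ∀ u z, F u z ≠ ⊥)
    (hdomp : ∃ xbar : X, ∃ r : ℝ, pRob F xbar = (r : EReal)) (xs : X →L[ℝ] ℝ) :
    List.TFAE
      [∃ (u : U) (ys : Y u →L[ℝ] ℝ),
         conj1 (pRob F) xs = conj2 (F u) xs ys ∧ conj2 (F u) xs ys = qRob F xs,
       ∃ (u : U) (ys : Y u →L[ℝ] ℝ),
         ∀ ε : ℝ, 0 ≤ ε → M1 (pRob F) ε xs = Bset F ε u ys xs,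
       ∃ εbar : ℝ, 0 < εbar ∧ ∃ (u : U) (ys : Y u →L[ℝ] ℝ),
         ∀ ε : ℝ, 0 < ε → ε < εbar → M1 (pRob F) ε xs = Bset F ε u ys xs] :=
  strong_robust_duality_iff_M_eq_Bset_general F hdomp xs

end RobustDuality
end
end

section
/- Let (f_u)_{u∈U} be a family of functions f_u : X → ℝ ∪ {+∞} with U nonempty, p := sup_{u∈U} f_u, and let x* ∈ X* be such that (Mp)(x*) := argmin(p − x*) is nonempty. Then the following are equivalent: (i) (sup_{u∈U} f_u)*(x*) = min_{u∈U} f_u*(x*), with attainment at the first member (i.e., the supremum defining p*(x*) is attained and the infimum over u is attained); (ii) there exists u ∈ U such that (Mp)(x*) = B_u(x*), where B_u(x*) := J(u) ∩ (Mf_u)(x*), J(u) := {x ∈ X : p(x) ∈ ℝ and f_u(x) = p(x)}, and (Mf_u)(x*) := argmin(f_u − x*). -/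
noncomputable section

namespace RobustDuality

variable {X : Type*} [AddCommGroup X] [Module ℝ X] [TopologicalSpace X]
  [IsTopologicalAddGroup X] [ContinuousSMul ℝ X] [LocallyConvexSpace ℝ X] [T2Space X]

variable {U : Type*}

/-- `p := sup_{u ∈ U} f_u`. -/
def pSup (f : U → X → EReal) (x : X) : EReal := ⨆ u, f u x

/-- `J^ε(u) := {x : p x ∈ ℝ ∧ f_u x ≥ p x - ε}`. -/
def J2set (f : U → X → EReal) (ε : ℝ) (u : U) : Set X :=
  {x | (∃ r : ℝ, pSup f x = (r : EReal)) ∧ pSup f x - (ε : EReal) ≤ f u x}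

/-- `𝒜^ε(x*)` for the non-perturbation case. -/
def calA2 (f : U → X → EReal) (ε : ℝ) (xs : X →L[ℝ] ℝ) : Set X :=
  ⋂ (η : ℝ) (_ : 0 < η),
    ⋃ (u : U) (ε₁ : ℝ) (ε₂ : ℝ) (_ : 0 ≤ ε₁) (_ : 0 ≤ ε₂) (_ : ε₁ + ε₂ = ε + η),
      J2set f ε₁ u ∩ M1 (f u) ε₂ xs

/-- `B^ε_u(x*)` for the non-perturbation case. -/
def B2set (f : U → X → EReal) (ε : ℝ) (u : U) (xs : X →L[ℝ] ℝ) : Set X :=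
  ⋃ (ε₁ : ℝ) (ε₂ : ℝ) (_ : 0 ≤ ε₁) (_ : 0 ≤ ε₂) (_ : ε₁ + ε₂ = ε),
    J2set f ε₁ u ∩ M1 (f u) ε₂ xs

/-- `I^ε(x) := {u : f_u x ≥ p x - ε}` (when `p x ∈ ℝ`). -/
def I2set (f : U → X → EReal) (ε : ℝ) (x : X) : Set U :=
  {u | (∃ r : ℝ, pSup f x = (r : EReal)) ∧ pSup f x - (ε : EReal) ≤ f u x}

/-- `C^ε(x)` for the non-perturbation case. -/
def C2set (f : U → X → EReal) (ε : ℝ) (x : X) : Set (X →L[ℝ] ℝ) :=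
  ⋂ (η : ℝ) (_ : 0 < η),
    ⋃ (ε₁ : ℝ) (ε₂ : ℝ) (_ : 0 ≤ ε₁) (_ : 0 ≤ ε₂) (_ : ε₁ + ε₂ = ε + η)
      (u : U) (_ : u ∈ I2set f ε₁ x), epsSubdiff1 (f u) ε₂ x

/-- `J(u) := {x : p x ∈ ℝ ∧ f_u x = p x}`. -/
def J02set (f : U → X → EReal) (u : U) : Set X :=
  {x | (∃ r : ℝ, pSup f x = (r : EReal)) ∧ f u x = pSup f x}

/-- `B_u(x*) := J(u) ∩ (M f_u)(x*)`. -/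
def B02set (f : U → X → EReal) (u : U) (xs : X →L[ℝ] ℝ) : Set X :=
  J02set f u ∩ M1 (f u) 0 xs

/-! Since `p = sup_u f_u` dominates every `f_u`, the conjugate `p*(x*) = -inf (p - x*)` is at most
every `f_u*(x*) = -inf (f_u - x*)`, and once `p - x*` attains its (real) infimum, equality
`p*(x*) = f_u*(x*)` is the same as `argmin (p - x*)` being the set of minimizers of `f_u - x*` where
`f_u` and `p` agree. Attainment of the supremum defining `p*(x*)` is automatic, at any point of
`argmin (p - x*)`. -/

theorem mem_epsArgmin_zero_iff {Z : Type*} {h : Z → EReal} {z : Z} :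
    z ∈ epsArgmin h 0 ↔ (∃ r : ℝ, h z = r) ∧ h z = ⨅ w, h w := by
  simp only [epsArgmin, Set.mem_ofPred_eq, EReal.coe_zero, add_zero]
  exact and_congr_right fun _ => ⟨fun hle => le_antisymm hle (iInf_le h z), le_of_eq⟩

theorem epsArgmin_zero_eq_inter_iff {Z : Type*} {g φ : Z → EReal} (hgφ : ∀ z, g z ≤ φ z)
    (hφ : (epsArgmin φ 0).Nonempty) :
    epsArgmin φ 0 = {z | g z = φ z} ∩ epsArgmin g 0 ↔ ⨅ z, g z = ⨅ z, φ z := by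
  obtain ⟨a, ha⟩ := hφ
  constructor
  · intro heq
    obtain ⟨hga, hag⟩ := heq ▸ ha
    rw [← (mem_epsArgmin_zero_iff.1 hag).2, hga, ← (mem_epsArgmin_zero_iff.1 ha).2]
  · intro hinf
    ext z
    simp only [Set.mem_inter_iff, Set.mem_ofPred_eq, mem_epsArgmin_zero_iff]
    constructor
    · rintro ⟨hreal, hmin⟩
      have hgz : g z = φ z := le_antisymm (hgφ z) (hmin ▸ hinf ▸ iInf_le g z)
      exact ⟨hgz, hgz ▸ hreal, hgz.trans (hmin.trans hinf.symm)⟩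
    · rintro ⟨hgz, hreal, hmin⟩
      exact ⟨hgz ▸ hreal, hgz ▸ hmin.trans hinf⟩

theorem _root_.EReal.sub_coe_left_injective (t : ℝ) : Function.Injective fun a : EReal => a - t :=
  fun a b hab => by
    simpa only [EReal.sub_add_cancel] using congrArg (· + (t : EReal)) hab

theorem _root_.EReal.neg_iInf {ι : Sort*} (g : ι → EReal) : -⨅ i, g i = ⨆ i, -g i :=
  EReal.negOrderIso.map_iInf g

theorem le_pSup {E : Type*} (f : U → E → EReal) (u : U) (x : E) : f u x ≤ pSup f x :=
  le_iSup (fun v => f v x) u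

section

variable {E : Type*} [AddCommGroup E] [Module ℝ E] [TopologicalSpace E]

theorem conj1_eq_neg_iInf (h : E → EReal) (xs : E →L[ℝ] ℝ) :
    conj1 h xs = -⨅ x, (h x - ((xs x : ℝ) : EReal)) := by
  rw [EReal.neg_iInf]
  refine iSup_congr fun x => ?_
  rw [EReal.neg_sub (Or.inr (EReal.coe_ne_bot _)) (Or.inr (EReal.coe_ne_top _)),
    sub_eq_add_neg, add_comm]

theorem conj1_antitone {h k : E → EReal} (hk : ∀ x, h x ≤ k x) (xs : E →L[ℝ] ℝ) :
    conj1 k xs ≤ conj1 h xs :=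
  iSup_mono fun x => EReal.sub_le_sub le_rfl (hk x)

theorem sub_eq_conj1_of_mem_M1 {h : E → EReal} {xs : E →L[ℝ] ℝ} {a : E} (ha : a ∈ M1 h 0 xs) :
    ((xs a : ℝ) : EReal) - h a = conj1 h xs := by
  rw [conj1_eq_neg_iInf, ← (mem_epsArgmin_zero_iff.1 ha).2,
    EReal.neg_sub (Or.inr (EReal.coe_ne_bot _)) (Or.inr (EReal.coe_ne_top _)),
    sub_eq_add_neg, add_comm]

theorem B02set_eq (f : U → E → EReal) (u : U) (xs : E →L[ℝ] ℝ) :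
    B02set f u xs =
      {x | f u x - ((xs x : ℝ) : EReal) = pSup f x - ((xs x : ℝ) : EReal)} ∩ M1 (f u) 0 xs := by
  ext x
  simp only [B02set, J02set, Set.mem_inter_iff, Set.mem_ofPred_eq]
  constructor
  · rintro ⟨⟨-, hfp⟩, hx⟩
    exact ⟨by rw [hfp], hx⟩
  · rintro ⟨hfp, hx⟩
    have hfp' : f u x = pSup f x := EReal.sub_coe_left_injective _ hfp
    obtain ⟨r, hr⟩ := hx.1
    refine ⟨⟨⟨r + xs x, ?_⟩, hfp'⟩, hx⟩
    rw [← hfp', ← EReal.sub_add_cancel (a := f u x) (b := xs x)]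
    exact (congrArg (· + ((xs x : ℝ) : EReal)) hr).trans (EReal.coe_add _ _).symm

theorem conj1_pSup_eq_iff_M1_eq_B02set (f : U → E → EReal) (u : U) (xs : E →L[ℝ] ℝ)
    (hM : (M1 (pSup f) 0 xs).Nonempty) :
    conj1 (pSup f) xs = conj1 (f u) xs ↔ M1 (pSup f) 0 xs = B02set f u xs := by
  rw [B02set_eq, conj1_eq_neg_iInf, conj1_eq_neg_iInf, neg_inj, eq_comm]
  exact (epsArgmin_zero_eq_inter_iff
    (fun x => EReal.sub_le_sub (le_pSup f u x) le_rfl) hM).symm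

end

theorem minmax_infSup_duality_iff_general
    (f : U → X → EReal) (xs : X →L[ℝ] ℝ) (hM : (M1 (pSup f) 0 xs).Nonempty) :
    ((∃ xbar : X, ((xs xbar : ℝ) : EReal) - pSup f xbar = conj1 (pSup f) xs) ∧
      ∃ u : U, conj1 (pSup f) xs = conj1 (f u) xs ∧
        conj1 (f u) xs = ⨅ v : U, conj1 (f v) xs) ↔
    (∃ u : U, M1 (pSup f) 0 xs = B02set f u xs) := by
  constructor
  · rintro ⟨-, u, hu, -⟩
    exact ⟨u, (conj1_pSup_eq_iff_M1_eq_B02set f u xs hM).1 hu⟩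
  · rintro ⟨u, hu⟩
    have hconj := (conj1_pSup_eq_iff_M1_eq_B02set f u xs hM).2 hu
    obtain ⟨a, ha⟩ := hM
    refine ⟨⟨a, sub_eq_conj1_of_mem_M1 ha⟩, u, hconj, ?_⟩
    exact le_antisymm (le_iInf fun v => hconj ▸ conj1_antitone (le_pSup f v) xs) (iInf_le _ u)

/-- Corollary 5.4 (min-max robust duality for Case 2: no linear perturbations). -/
theorem minmax_infSup_duality_iff
    (f : U → X → EReal) (hU : Nonempty U) (hf : ∀ u x, f u x ≠ ⊥)
    (xs : X →L[ℝ] ℝ) (hM : (M1 (pSup f) 0 xs).Nonempty) :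
    ((∃ xbar : X, ((xs xbar : ℝ) : EReal) - pSup f xbar = conj1 (pSup f) xs) ∧
      ∃ u : U, conj1 (pSup f) xs = conj1 (f u) xs ∧
        conj1 (f u) xs = ⨅ v : U, conj1 (f v) xs) ↔
    (∃ u : U, M1 (pSup f) 0 xs = B02set f u xs) :=
  minmax_infSup_duality_iff_general f xs hM

end RobustDuality
end
end
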